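/- Let L ⊴ G, φ ∈ Irr(L) invariant in G, L ≤ K ≤ G with K ⊴ G, and g ∈ G. If g^m is K-φ-good for some integer m coprime to |K/L|, then g is K-φ-good. -/

import Mathlib

open MonoidAlgebra Finset
open scoped Classical

noncomputable section

namespace CF

variable {G : Type} [Group G] [Fintype G]

/-- A group element viewed in the complex group algebra. -/
def ι (g : G) : MonoidAlgebra ℂ G := MonoidAlgebra.single g 1

/-- The central idempotent of `ℂL` attached to an (irreducible) character `φ` of the
subgroup `L`, viewed inside the group algebra `ℂG`. -/
def eIdem (L : Subgroup G) (φ : ↥L → ℂ) : MonoidAlgebra ℂ G :=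
  (φ 1 / (Fintype.card L : ℂ)) • ∑ l : L, MonoidAlgebra.single (l : G) (φ l⁻¹)

/-- `a` is supported on the subgroup `L`. -/
def SuppIn (L : Subgroup G) (a : MonoidAlgebra ℂ G) : Prop := ∀ g : G, g ∉ L → a.coeff g = 0

/-- `a` lies in the corner `e_φ ℂG e_φ` determined by the idempotent `e_φ`. -/
def InCorner (L : Subgroup G) (φ : ↥L → ℂ) (a : MonoidAlgebra ℂ G) : Prop :=
  a * eIdem L φ = a ∧ eIdem L φ * a = a

/-- `c` is a unit of `ℂ L e_φ` (with inverse `c'`) inducing on `ℂ L e_φ` the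
conjugation action of the element `x`. -/
def Induces (L : Subgroup G) (φ : ↥L → ℂ) (x : G) (c c' : MonoidAlgebra ℂ G) : Prop :=
  SuppIn L c ∧ SuppIn L c' ∧ InCorner L φ c ∧ InCorner L φ c' ∧
  c * c' = eIdem L φ ∧ c' * c = eIdem L φ ∧
  ∀ a, SuppIn L a → InCorner L φ a → ι x⁻¹ * a * ι x = c' * a * c

/-- The Isaacs–Dade scalar `⟨x,y⟩_φ = z`, defined by `⟨x,y⟩_φ e_φ = [x,y][c_y,c_x]`. -/
def DadeScalar (L : Subgroup G) (φ : ↥L → ℂ) (x y : G) (z : ℂ) : Prop :=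
  ∃ cx cx' cy cy', Induces L φ x cx cx' ∧ Induces L φ y cy cy' ∧
    ι (x⁻¹ * y⁻¹ * x * y) * (cy' * cx' * cy * cx) = z • eIdem L φ

/-- `χ` is the character of an irreducible complex representation of `H`. -/
def IsIrrChar (H : Type) [Group H] (χ : H → ℂ) : Prop :=
  ∃ V : FDRep ℂ H, CategoryTheory.Simple V ∧ χ = V.character

/-- The usual inner product of complex-valued class functions on a finite group. -/
def innerChar (H : Type) [Group H] [Fintype H] (α β : H → ℂ) : ℂ :=
  (Fintype.card H : ℂ)⁻¹ * ∑ h : H, α h * (starRingEnd ℂ) (β h)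

/-- `φ ∈ Irr L` is invariant under conjugation by all elements of `G`. -/
def Invariant (L : Subgroup G) [hN : L.Normal] (φ : ↥L → ℂ) : Prop :=
  ∀ (g : G) (l : ↥L), φ ⟨g⁻¹ * l * g, by simpa [mul_assoc] using hN.conj_mem l l.2 g⁻¹⟩ = φ l

end CF

open CF

/-- `g` is `K`-`φ`-good: `⟨c,g⟩_φ = 1` for all `c ∈ K` with `Lc ∈ C_{K/L}(Lg)`. -/
def KGood {G : Type} [Group G] [Fintype G] (L K : Subgroup G) (φ : ↥L → ℂ) (g : G) : Prop :=
  ∀ c ∈ K, c⁻¹ * g⁻¹ * c * g ∈ L → ∀ z : ℂ, DadeScalar L φ c g z → z = 1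

/-!
Write `e = e_φ` and, for `c` inducing `x` with corner inverse `c'`, put `u_x = x c'` and
`v_x = c x⁻¹`. Then `u_x v_x = v_x u_x = e` (the first by invariance of `φ`), and `u_x`, `v_x`
centralize `e ℂL e`. The equation defining `⟨x,y⟩_φ = z` becomes `v_x v_y u_x u_y = z e`, that is
`v_y u_x = z u_x v_y`. Since `c^k` induces `x^k`, this gives `⟨x,y^k⟩_φ = z^k`; and if `x^n ∈ L`,
then `u_x^n ∈ e ℂL e` commutes with `v_y`, which forces `z^n = 1`.

For `c ∈ K` with `[c,g] ∈ L` and `z = ⟨c,g⟩_φ` we get `z^m = ⟨c,g^m⟩_φ = 1`, and `z^|K:L| = 1`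
because `c^|K:L| ∈ L`; as `m` and `|K:L|` are coprime, `z = 1`. If `e = 0`, every scalar is a
Dade scalar, so no element is good.
-/

theorem Subgroup.relIndex_eq_card_div_card {G : Type*} [Group G] [Finite G]
    {H K : Subgroup G} (h : H ≤ K) : H.relIndex K = Nat.card K / Nat.card H := by
  have := Subgroup.relIndex_mul_relIndex ⊥ H K bot_le h
  rw [Subgroup.relIndex_bot_left, Subgroup.relIndex_bot_left] at this
  rw [← this, Nat.mul_div_cancel_left _ Nat.card_pos]

theorem commutator_pow_right_mem {G : Type*} [Group G] {N : Subgroup G} [N.Normal] {a b : G}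
    (h : a⁻¹ * b⁻¹ * a * b ∈ N) (k : ℕ) : a⁻¹ * (b ^ k)⁻¹ * a * b ^ k ∈ N := by
  have mem_iff : ∀ b : G, a⁻¹ * b⁻¹ * a * b ∈ N ↔ Commute (a : G ⧸ N) b := fun b => by
    rw [← QuotientGroup.eq_one_iff, ← Commute.inv_inv_iff,
      ← commutatorElement_eq_one_iff_commute, commutatorElement_def]
    simp
  rw [mem_iff] at h ⊢
  simpa using h.pow_right k

section
variable {R A : Type*} [CommSemiring R] [Semiring A] [Algebra R A] {a b : A} {r : R}

theorem pow_mul_eq_smul_mul_pow (h : a * b = r • (b * a)) (k : ℕ) :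
    a ^ k * b = r ^ k • (b * a ^ k) := by
  have : SemiconjBy b (r • a) a := by rw [SemiconjBy, mul_smul_comm, h]
  simpa [smul_pow, smul_mul_assoc, mul_smul_comm] using (this.pow_right k).eq.symm

theorem mul_pow_eq_smul_pow_mul (h : a * b = r • (b * a)) (k : ℕ) :
    a * b ^ k = r ^ k • (b ^ k * a) := by
  have : SemiconjBy a b (r • b) := by rw [SemiconjBy, smul_mul_assoc, h]
  simpa [smul_pow, smul_mul_assoc] using (this.pow_right k).eq

end

namespace CF

variable {G : Type} [Group G] {L : Subgroup G} {φ : ↥L → ℂ}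

theorem ι_mul (a b : G) : ι (a * b) = ι a * ι b := (MonoidAlgebra.of ℂ G).map_mul a b

theorem ι_one : ι (1 : G) = 1 := (MonoidAlgebra.of ℂ G).map_one

theorem ι_pow (a : G) (k : ℕ) : ι (a ^ k) = ι a ^ k := (MonoidAlgebra.of ℂ G).map_pow a k

theorem ι_inv_mul (a : G) : ι a⁻¹ * ι a = 1 := by rw [← ι_mul, inv_mul_cancel, ι_one]

theorem ι_mul_inv (a : G) : ι a * ι a⁻¹ = 1 := by rw [← ι_mul, mul_inv_cancel, ι_one]

theorem commute_ι_of_conj {x : G} {a : MonoidAlgebra ℂ G} (h : ι x⁻¹ * a * ι x = a) :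
    Commute (ι x) a := by
  rw [Commute, SemiconjBy]
  conv_lhs => rw [← h]
  rw [← mul_assoc, ← mul_assoc, ι_mul_inv, one_mul]

theorem commute_ι_inv_of_conj {x : G} {a : MonoidAlgebra ℂ G} (h : ι x⁻¹ * a * ι x = a) :
    Commute (ι x⁻¹) a := by
  rw [Commute, SemiconjBy]
  conv_rhs => rw [← h]
  rw [mul_assoc _ (ι x), ι_mul_inv, mul_one]

theorem suppIn_ι {x : G} (hx : x ∈ L) : SuppIn L (ι x) := by
  intro g hg
  have : g ≠ x := fun h => hg (h ▸ hx)
  simp [ι, MonoidAlgebra.coeff_single, Ne.symm this]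

theorem SuppIn.mul {a b : MonoidAlgebra ℂ G} (ha : SuppIn L a) (hb : SuppIn L b) :
    SuppIn L (a * b) := by
  intro g hg
  by_contra h
  obtain ⟨s, hs, t, ht, rfl⟩ := Finset.mem_mul.mp
    (MonoidAlgebra.support_coeff_mul_subset a b (Finsupp.mem_support_iff.mpr h))
  have hsL : s ∈ L := by_contra fun hs' => Finsupp.mem_support_iff.mp hs (ha s hs')
  have htL : t ∈ L := by_contra fun ht' => Finsupp.mem_support_iff.mp ht (hb t ht')
  exact hg (L.mul_mem hsL htL)

theorem SuppIn.pow {a : MonoidAlgebra ℂ G} (ha : SuppIn L a) (k : ℕ) : SuppIn L (a ^ k) := by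
  induction k with
  | zero => simpa [ι_one] using suppIn_ι (L := L) L.one_mem
  | succ k ih => rw [pow_succ]; exact ih.mul ha

variable [Fintype G]

theorem InCorner.mul {a b : MonoidAlgebra ℂ G} (ha : InCorner L φ a) (hb : InCorner L φ b) :
    InCorner L φ (a * b) :=
  ⟨by rw [mul_assoc, hb.1], by rw [← mul_assoc, ha.2]⟩

theorem InCorner.pow {a : MonoidAlgebra ℂ G} (ha : InCorner L φ a) {k : ℕ} (hk : k ≠ 0) :
    InCorner L φ (a ^ k) := by
  obtain ⟨k, rfl⟩ := Nat.exists_eq_succ_of_ne_zero hk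
  exact ⟨by rw [pow_succ, mul_assoc, ha.1], by rw [pow_succ', ← mul_assoc, ha.2]⟩

theorem ι_mul_eIdem_mul_ι_inv [hN : L.Normal] (hφ : Invariant L φ) (x : G) :
    ι x * eIdem L φ * ι x⁻¹ = eIdem L φ := by
  unfold eIdem
  rw [mul_smul_comm, smul_mul_assoc, Finset.mul_sum, Finset.sum_mul]
  congr 1
  have hconj : ∀ l : L, φ (MulAut.conjNormal x l) = φ l := fun l => by
    convert hφ x⁻¹ l using 2
    ext
    simp
  refine Fintype.sum_equiv (MulAut.conjNormal x).toEquiv _ _ fun l => ?_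
  simp only [ι, MonoidAlgebra.single_mul_single, one_mul, mul_one, MulEquiv.toEquiv_eq_coe,
    MulEquiv.coe_toEquiv, ← map_inv, hconj, MulAut.conjNormal_apply]

theorem commute_ι_eIdem [L.Normal] (hφ : Invariant L φ) (x : G) :
    Commute (ι x) (eIdem L φ) := by
  rw [Commute, SemiconjBy]
  conv_rhs => rw [← ι_mul_eIdem_mul_ι_inv hφ x]
  rw [mul_assoc _ (ι x⁻¹), ι_inv_mul, mul_one]

namespace Induces

variable {x : G} {c c' a : MonoidAlgebra ℂ G}

theorem isIdempotentElem_eIdem (h : Induces L φ x c c') : IsIdempotentElem (eIdem L φ) := by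
  obtain ⟨-, -, -, hc', hcc', -, -⟩ := h
  rw [IsIdempotentElem]
  conv_lhs => arg 1; rw [← hcc']
  rw [mul_assoc, hc'.1, hcc']

theorem commute_ι_left (h : Induces L φ x c c') : Commute (ι x) c := by
  obtain ⟨hs, -, hc, -, -, hc'c, hconj⟩ := h
  exact commute_ι_of_conj (by rw [hconj c hs hc, hc'c, hc.2])

theorem commute_ι_inv_left (h : Induces L φ x c c') : Commute (ι x⁻¹) c := by
  obtain ⟨hs, -, hc, -, -, hc'c, hconj⟩ := h
  exact commute_ι_inv_of_conj (by rw [hconj c hs hc, hc'c, hc.2])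

theorem commute_ι_right (h : Induces L φ x c c') : Commute (ι x) c' := by
  obtain ⟨-, hs', -, hc', -, hc'c, hconj⟩ := h
  exact commute_ι_of_conj (by rw [hconj c' hs' hc', mul_assoc, hc'c, hc'.1])

theorem ι_conj_pow (h : Induces L φ x c c') (k : ℕ) (hs : SuppIn L a) (hc : InCorner L φ a) :
    ι (x ^ k)⁻¹ * a * ι (x ^ k) = c' ^ k * a * c ^ k := by
  induction k generalizing a with
  | zero => simp [ι_one]
  | succ k ih =>
    obtain ⟨hsc, hsc', hcc, hcc', -, -, hconj⟩ := h
    calc ι (x ^ (k + 1))⁻¹ * a * ι (x ^ (k + 1))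
        = ι (x ^ k)⁻¹ * (ι x⁻¹ * a * ι x) * ι (x ^ k) := by
          simp only [pow_succ', mul_inv_rev, ι_mul, mul_assoc]
      _ = ι (x ^ k)⁻¹ * (c' * a * c) * ι (x ^ k) := by rw [hconj a hs hc]
      _ = c' ^ (k + 1) * a * c ^ (k + 1) := by
          rw [ih (hsc'.mul hs |>.mul hsc) (hcc'.mul hc |>.mul hcc), pow_succ c', pow_succ' c]
          simp only [mul_assoc]

theorem pow (h : Induces L φ x c c') {k : ℕ} (hk : k ≠ 0) :
    Induces L φ (x ^ k) (c ^ k) (c' ^ k) := by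
  have he := h.isIdempotentElem_eIdem
  obtain ⟨hsc, hsc', hcc, hcc', hmul, hmul', -⟩ := id h
  have hcomm : Commute c c' := hmul.trans hmul'.symm
  refine ⟨hsc.pow k, hsc'.pow k, hcc.pow hk, hcc'.pow hk, ?_, ?_,
    fun a hs hc => h.ι_conj_pow k hs hc⟩
  · rw [← hcomm.mul_pow, hmul, he.pow_eq hk]
  · rw [← hcomm.symm.mul_pow, hmul', he.pow_eq hk]

theorem v_mul_u (h : Induces L φ x c c') : c * ι x⁻¹ * (ι x * c') = eIdem L φ := by
  obtain ⟨-, -, -, -, hmul, -, -⟩ := h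
  rw [mul_assoc, ← mul_assoc (ι x⁻¹), ι_inv_mul, one_mul, hmul]

theorem u_mul_v [L.Normal] (hφ : Invariant L φ) (h : Induces L φ x c c') :
    ι x * c' * (c * ι x⁻¹) = eIdem L φ := by
  obtain ⟨-, -, -, -, -, hmul', -⟩ := h
  rw [mul_assoc, ← mul_assoc c', hmul', ← mul_assoc, ι_mul_eIdem_mul_ι_inv hφ]

theorem inCorner_u [L.Normal] (hφ : Invariant L φ) (h : Induces L φ x c c') :
    InCorner L φ (ι x * c') := by
  obtain ⟨-, -, -, hc', -, -, -⟩ := h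
  exact ⟨by rw [mul_assoc, hc'.1],
    by rw [← mul_assoc, ← (commute_ι_eIdem hφ x).eq, mul_assoc, hc'.2]⟩

theorem commute_u (h : Induces L φ x c c') (hs : SuppIn L a) (hc : InCorner L φ a) :
    Commute (ι x * c') a := by
  obtain ⟨-, -, -, -, hmul, -, hconj⟩ := h
  calc ι x * c' * a = ι x * (c' * a * c) * c' := by simp only [mul_assoc, hmul, hc.1]
    _ = ι x * (ι x⁻¹ * a * ι x) * c' := by rw [hconj a hs hc]
    _ = a * (ι x * c') := by simp only [← mul_assoc, ι_mul_inv, one_mul]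

theorem commute_v (h : Induces L φ x c c') (hs : SuppIn L a) (hc : InCorner L φ a) :
    Commute (c * ι x⁻¹) a := by
  obtain ⟨-, -, -, -, hmul, -, hconj⟩ := h
  calc c * ι x⁻¹ * a = c * (ι x⁻¹ * a * ι x) * ι x⁻¹ := by
        simp only [mul_assoc, ι_mul_inv, mul_one]
    _ = c * c' * a * (c * ι x⁻¹) := by rw [hconj a hs hc]; simp only [mul_assoc]
    _ = a * (c * ι x⁻¹) := by rw [hmul, hc.2]

theorem u_pow (h : Induces L φ x c c') (k : ℕ) : (ι x * c') ^ k = ι (x ^ k) * c' ^ k := by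
  rw [h.commute_ι_right.mul_pow, ι_pow]

theorem v_pow (h : Induces L φ x c c') (k : ℕ) :
    (c * ι x⁻¹) ^ k = c ^ k * ι (x ^ k)⁻¹ := by
  rw [h.commute_ι_inv_left.symm.mul_pow, ← ι_pow, inv_pow]

end Induces

variable {x y : G} {cx cx' cy cy' : MonoidAlgebra ℂ G} {z : ℂ}

theorem ι_commutator_mul (hx : Induces L φ x cx cx') (hy : Induces L φ y cy cy') :
    ι (x⁻¹ * y⁻¹ * x * y) * (cy' * cx' * cy * cx) =
      cx * ι x⁻¹ * (cy * ι y⁻¹) * (ι x * cx') * (ι y * cy') := by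
  obtain ⟨hsx, hsx', hcx, hcx', -⟩ := id hx
  obtain ⟨hsy, -, hcy, -⟩ := id hy
  have hsQ : SuppIn L (cy * cx) := hsy.mul hsx
  have hcQ : InCorner L φ (cy * cx) := hcy.mul hcx
  calc ι (x⁻¹ * y⁻¹ * x * y) * (cy' * cx' * cy * cx)
      = ι x⁻¹ * ι y⁻¹ * ι x * (ι y * cy' * (cx' * (cy * cx))) := by
        simp only [ι_mul, mul_assoc]
    _ = ι x⁻¹ * ι y⁻¹ * ι x * (cx' * (cy * cx) * (ι y * cy')) := by
        rw [(hy.commute_u (hsx'.mul hsQ) (hcx'.mul hcQ)).eq]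
    _ = ι x⁻¹ * ι y⁻¹ * (ι x * cx' * (cy * cx)) * (ι y * cy') := by simp only [mul_assoc]
    _ = ι x⁻¹ * ι y⁻¹ * (cy * cx * (ι x * cx')) * (ι y * cy') := by
        rw [(hx.commute_u hsQ hcQ).eq]
    _ = ι x⁻¹ * (ι y⁻¹ * cy * cx) * (ι x * cx') * (ι y * cy') := by simp only [mul_assoc]
    _ = ι x⁻¹ * (cy * ι y⁻¹ * cx) * (ι x * cx') * (ι y * cy') := by
        rw [hy.commute_ι_inv_left.eq]
    _ = ι x⁻¹ * cx * (cy * ι y⁻¹) * (ι x * cx') * (ι y * cy') := by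
        rw [(hy.commute_v hsx hcx).eq]; simp only [mul_assoc]
    _ = cx * ι x⁻¹ * (cy * ι y⁻¹) * (ι x * cx') * (ι y * cy') := by
        rw [hx.commute_ι_inv_left.eq]

theorem v_mul_u_eq_smul_u_mul_v [L.Normal] (hφ : Invariant L φ)
    (hx : Induces L φ x cx cx') (hy : Induces L φ y cy cy')
    (heq : ι (x⁻¹ * y⁻¹ * x * y) * (cy' * cx' * cy * cx) = z • eIdem L φ) :
    cy * ι y⁻¹ * (ι x * cx') = z • (ι x * cx' * (cy * ι y⁻¹)) := by
  obtain ⟨-, -, hcy, -⟩ := id hy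
  have hvy : eIdem L φ * (cy * ι y⁻¹) = cy * ι y⁻¹ := by rw [← mul_assoc, hcy.2]
  have hux := (hx.inCorner_u hφ).1
  rw [ι_commutator_mul hx hy] at heq
  set ux := ι x * cx'
  set vx := cx * ι x⁻¹
  set uy := ι y * cy'
  set vy := cy * ι y⁻¹
  calc vy * ux = eIdem L φ * vy * (ux * eIdem L φ) := by rw [hvy, hux]
    _ = ux * vx * vy * (ux * (uy * vy)) := by rw [hx.u_mul_v hφ, hy.u_mul_v hφ]
    _ = ux * (vx * vy * ux * uy) * vy := by simp only [mul_assoc]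
    _ = z • (ux * vy) := by rw [heq, mul_smul_comm, smul_mul_assoc, hux]

theorem DadeScalar.pow_right [L.Normal] (hφ : Invariant L φ) (h : DadeScalar L φ x y z)
    {k : ℕ} (hk : k ≠ 0) : DadeScalar L φ x (y ^ k) (z ^ k) := by
  obtain ⟨cx, cx', cy, cy', hx, hy, heq⟩ := h
  have hrel := pow_mul_eq_smul_mul_pow (v_mul_u_eq_smul_u_mul_v hφ hx hy heq) k
  refine ⟨cx, cx', cy ^ k, cy' ^ k, hx, hy.pow hk, ?_⟩
  rw [ι_commutator_mul hx (hy.pow hk), ← hy.u_pow, ← hy.v_pow]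
  calc cx * ι x⁻¹ * (cy * ι y⁻¹) ^ k * (ι x * cx') * (ι y * cy') ^ k
      = cx * ι x⁻¹ * ((cy * ι y⁻¹) ^ k * (ι x * cx')) * (ι y * cy') ^ k := by
        rw [mul_assoc (cx * ι x⁻¹)]
    _ = z ^ k • (cx * ι x⁻¹ * (ι x * cx') * ((cy * ι y⁻¹) ^ k * (ι y * cy') ^ k)) := by
        rw [hrel, mul_smul_comm, smul_mul_assoc]; simp only [mul_assoc]
    _ = z ^ k • eIdem L φ := by
        rw [hx.v_mul_u, hy.v_pow, hy.u_pow, (hy.pow hk).v_mul_u, hx.isIdempotentElem_eIdem.eq]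

theorem DadeScalar.pow_eq_one [L.Normal] (hφ : Invariant L φ) (h : DadeScalar L φ x y z)
    {n : ℕ} (hn : n ≠ 0) (hxn : x ^ n ∈ L) (he : eIdem L φ ≠ 0) : z ^ n = 1 := by
  obtain ⟨cx, cx', cy, cy', hx, hy, heq⟩ := h
  obtain ⟨-, hsx', -⟩ := id hx
  have hrel := mul_pow_eq_smul_pow_mul (v_mul_u_eq_smul_u_mul_v hφ hx hy heq) n
  rw [hx.u_pow] at hrel
  have hcomm := hy.commute_v ((suppIn_ι hxn).mul (hsx'.pow n)) ((hx.pow hn).inCorner_u hφ)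
  have hvu := (hx.pow hn).v_mul_u
  have hvuy := hy.v_mul_u
  set u := ι (x ^ n) * cx' ^ n
  set v := cx ^ n * ι (x ^ n)⁻¹
  set uy := ι y * cy'
  set vy := cy * ι y⁻¹
  have hfix : z ^ n • (u * vy) = u * vy := by rw [← hrel, hcomm.eq]
  have hsandwich : ∀ w : ℂ, v * (w • (u * vy)) * uy = w • eIdem L φ := fun w => by
    rw [mul_smul_comm, smul_mul_assoc,
      show v * (u * vy) * uy = v * u * (vy * uy) by simp only [mul_assoc],
      hvu, hvuy, hx.isIdempotentElem_eIdem.eq]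
  refine smul_left_injective ℂ he ?_
  calc z ^ n • eIdem L φ = v * (z ^ n • (u * vy)) * uy := (hsandwich _).symm
    _ = v * ((1 : ℂ) • (u * vy)) * uy := by rw [hfix, one_smul]
    _ = (1 : ℂ) • eIdem L φ := hsandwich 1

theorem dadeScalar_of_eIdem_eq_zero (he : eIdem L φ = 0) (x y : G) (z : ℂ) :
    DadeScalar L φ x y z := by
  have hzero : ∀ w : G, Induces L φ w 0 0 := fun w =>
    ⟨fun _ _ => rfl, fun _ _ => rfl, by simp [InCorner], by simp [InCorner], by simp [he],
      by simp [he], fun a _ ha => by rw [← ha.1, he]; simp⟩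
  exact ⟨0, 0, 0, 0, hzero x, hzero y, by simp [he]⟩

end CF

theorem stmt3_general {G : Type} [Group G] [Fintype G] (L K : Subgroup G) [L.Normal]
    (hLK : L ≤ K) (φ : ↥L → ℂ) (hφinv : Invariant L φ)
    (g : G) (m : ℕ) (hcop : Nat.Coprime m (Nat.card K / Nat.card L))
    (hgood : KGood L K φ (g ^ m)) :
    KGood L K φ g := by
  intro c hcK hcg z hz
  have he : eIdem L φ ≠ 0 := fun he =>
    absurd (hgood 1 K.one_mem (by simp) 2 (dadeScalar_of_eIdem_eq_zero he 1 _ 2)) (by norm_num)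
  have hzm : z ^ m = 1 := by
    rcases eq_or_ne m 0 with rfl | hm
    · exact pow_zero z
    · exact hgood c hcK (commutator_pow_right_mem hcg m) _ (hz.pow_right hφinv hm)
  rw [← Subgroup.relIndex_eq_card_div_card hLK] at hcop
  have hzn : z ^ L.relIndex K = 1 :=
    hz.pow_eq_one hφinv Subgroup.FiniteIndex.index_ne_zero (L.pow_relIndex_mem hcK) he
  exact (pow_eq_one_iff_of_coprime hcop).mp ⟨hzm, hzn⟩

/-- Lemma 2.7 of Ladisch.  If `g^m` is `K`-`φ`-good with `m` coprime
to `|K/L|`, then `g` is `K`-`φ`-good. -/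
theorem stmt3 {G : Type} [Group G] [Fintype G] (L K : Subgroup G) [L.Normal]
    (hLK : L ≤ K) (φ : ↥L → ℂ) (hφirr : IsIrrChar ↥L φ) (hφinv : Invariant L φ)
    (g : G) (m : ℕ) (hcop : Nat.Coprime m (Nat.card K / Nat.card L))
    (hgood : KGood L K φ (g ^ m)) :
    KGood L K φ g :=
  stmt3_general L K hLK φ hφinv g m hcop hgood
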